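/- Let X, Y, Z, U be finite random variables with joint pmf p satisfying the Markov chains Z - U - X and U - Z - X. For each z, let U_z = {u : p(u, z) > 0} and let α_z be the vector (p(z | x))_x over the alphabet of X. If z ≠ z' and the supports of α_z and α_{z'} are distinct (as subsets of the alphabet of X), then U_z ∩ U_{z'} = ∅. -/
import Mathlib


open Finset

open Classical in
noncomputable def prob {Ω α : Type*} [Fintype Ω] (p : Ω → ℝ) (X : Ω → α) (x : α) : ℝ :=
  ∑ ω, if X ω = x then p ω else 0

noncomputable def H2 {Ω α : Type*} [Fintype Ω] [Fintype α] (p : Ω → ℝ) (X : Ω → α) : ℝ :=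
  -∑ x, prob p X x * Real.logb 2 (prob p X x)

noncomputable def condH {Ω α β : Type*} [Fintype Ω] [Fintype α] [Fintype β]
    (p : Ω → ℝ) (X : Ω → α) (Y : Ω → β) : ℝ :=
  -∑ x, ∑ y, prob p (fun ω => (X ω, Y ω)) (x, y) *
      Real.logb 2 (prob p (fun ω => (X ω, Y ω)) (x, y) / prob p Y y)

noncomputable def MI {Ω α β : Type*} [Fintype Ω] [Fintype α] [Fintype β]
    (p : Ω → ℝ) (X : Ω → α) (Y : Ω → β) : ℝ :=
  ∑ x, ∑ y, prob p (fun ω => (X ω, Y ω)) (x, y) *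
      Real.logb 2 (prob p (fun ω => (X ω, Y ω)) (x, y) / (prob p X x * prob p Y y))

noncomputable def condMI {Ω α β γ : Type*} [Fintype Ω] [Fintype α] [Fintype β] [Fintype γ]
    (p : Ω → ℝ) (X : Ω → α) (Y : Ω → β) (Z : Ω → γ) : ℝ :=
  ∑ x, ∑ y, ∑ z, prob p (fun ω => (X ω, Y ω, Z ω)) (x, y, z) *
      Real.logb 2 (prob p (fun ω => (X ω, Y ω, Z ω)) (x, y, z) * prob p Z z /
        (prob p (fun ω => (X ω, Z ω)) (x, z) * prob p (fun ω => (Y ω, Z ω)) (y, z)))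

def IsPMF {Ω : Type*} [Fintype Ω] (p : Ω → ℝ) : Prop :=
  (∀ ω, 0 ≤ p ω) ∧ ∑ ω, p ω = 1

def MarkovChain {Ω α β γ : Type*} [Fintype Ω] (p : Ω → ℝ)
    (A : Ω → α) (B : Ω → β) (C : Ω → γ) : Prop :=
  ∀ a b c, prob p (fun ω => (A ω, B ω, C ω)) (a, b, c) * prob p B b =
    prob p (fun ω => (A ω, B ω)) (a, b) * prob p (fun ω => (C ω, B ω)) (c, b)

section Aux
variable {Ω α β γ : Type*} [Fintype Ω]

lemma prob_nonneg (p : Ω → ℝ) (hp : ∀ ω, 0 ≤ p ω) (X : Ω → α) (x : α) :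
    0 ≤ prob p X x := by
  unfold prob
  apply Finset.sum_nonneg
  intro ω _
  split <;> simp [hp ω]

lemma prob_swap (p : Ω → ℝ) (A : Ω → α) (B : Ω → β) (a : α) (b : β) :
    prob p (fun ω => (A ω, B ω)) (a, b) = prob p (fun ω => (B ω, A ω)) (b, a) := by
  unfold prob
  refine Finset.sum_congr rfl fun ω _ => ?_
  have h : ((A ω, B ω) = (a, b)) ↔ ((B ω, A ω) = (b, a)) := by
    simp only [Prod.mk.injEq]; exact and_comm
  by_cases hc : (A ω, B ω) = (a, b)
  · rw [if_pos hc, if_pos (h.mp hc)]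
  · rw [if_neg hc, if_neg (fun hd => hc (h.mpr hd))]

lemma prob_swap3 (p : Ω → ℝ) (A : Ω → α) (B : Ω → β) (C : Ω → γ) (a : α) (b : β) (c : γ) :
    prob p (fun ω => (A ω, B ω, C ω)) (a, b, c) =
      prob p (fun ω => (B ω, A ω, C ω)) (b, a, c) := by
  unfold prob
  refine Finset.sum_congr rfl fun ω _ => ?_
  have h : ((A ω, B ω, C ω) = (a, b, c)) ↔ ((B ω, A ω, C ω) = (b, a, c)) := by
    simp only [Prod.mk.injEq]; tauto
  by_cases hc : (A ω, B ω, C ω) = (a, b, c)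
  · rw [if_pos hc, if_pos (h.mp hc)]
  · rw [if_neg hc, if_neg (fun hd => hc (h.mpr hd))]

lemma prob_pair_le_right (p : Ω → ℝ) (hp : ∀ ω, 0 ≤ p ω) (A : Ω → α) (B : Ω → β)
    (a : α) (b : β) :
    prob p (fun ω => (A ω, B ω)) (a, b) ≤ prob p B b := by
  unfold prob
  apply Finset.sum_le_sum
  intro ω _
  by_cases h : (A ω, B ω) = (a, b)
  · have hb : B ω = b := congrArg Prod.snd h
    rw [if_pos h, if_pos hb]
  · rw [if_neg h]
    split
    · exact hp ω
    · exact le_rfl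

lemma prob_pair_le_left (p : Ω → ℝ) (hp : ∀ ω, 0 ≤ p ω) (A : Ω → α) (B : Ω → β)
    (a : α) (b : β) :
    prob p (fun ω => (A ω, B ω)) (a, b) ≤ prob p A a := by
  rw [prob_swap]
  exact prob_pair_le_right p hp B A b a

end Aux

/-- under Z - U - X and U - Z - X, if z ≠ z' have distinct supports
(as vectors of conditional probabilities given X), their message sets are disjoint. -/
theorem stmt14 {Ω 𝒳 𝒴 𝒰 𝒵 : Type*} [Fintype Ω]
    (p : Ω → ℝ) (hp : IsPMF p)
    (X : Ω → 𝒳) (Y : Ω → 𝒴) (Z : Ω → 𝒵) (U : Ω → 𝒰)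
    (h1 : MarkovChain p Z U X) (h2 : MarkovChain p U Z X)
    (z z' : 𝒵) (hzz : z ≠ z')
    (hsupp : {x : 𝒳 | 0 < prob p (fun ω => (Z ω, X ω)) (z, x)} ≠
      {x : 𝒳 | 0 < prob p (fun ω => (Z ω, X ω)) (z', x)}) :
    ∀ u, ¬ (0 < prob p (fun ω => (U ω, Z ω)) (u, z) ∧
      0 < prob p (fun ω => (U ω, Z ω)) (u, z')) := by
  have hnn := hp.1
  have key : ∀ u w, 0 < prob p (fun ω => (U ω, Z ω)) (u, w) →
      {x : 𝒳 | 0 < prob p (fun ω => (Z ω, X ω)) (w, x)} =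
        {x : 𝒳 | 0 < prob p (fun ω => (X ω, U ω)) (x, u)} := by
    intro u w hw
    have hpu : 0 < prob p U u := lt_of_lt_of_le hw (prob_pair_le_left p hnn U Z u w)
    have hpw : 0 < prob p Z w := lt_of_lt_of_le hw (prob_pair_le_right p hnn U Z u w)
    ext x
    simp only [Set.mem_setOf_eq]
    have e1 := h1 w u x
    have e2 := h2 u w x
    rw [prob_swap3 p Z U X w u x, prob_swap p Z U w u] at e1
    rw [prob_swap p X Z x w] at e2
    constructor
    · intro hx
      have h5 : 0 < prob p (fun ω => (U ω, Z ω, X ω)) (u, w, x) * prob p Z w := by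
        rw [e2]; exact mul_pos hw hx
      have ht : 0 < prob p (fun ω => (U ω, Z ω, X ω)) (u, w, x) := by
        rcases mul_pos_iff.mp h5 with ⟨h, _⟩ | ⟨_, h⟩
        · exact h
        · linarith
      have h6 : 0 < prob p (fun ω => (U ω, Z ω)) (u, w) *
          prob p (fun ω => (X ω, U ω)) (x, u) := by
        rw [← e1]; exact mul_pos ht hpu
      rcases mul_pos_iff.mp h6 with ⟨_, h⟩ | ⟨h, _⟩
      · exact h
      · linarith
    · intro hx
      have h5 : 0 < prob p (fun ω => (U ω, Z ω, X ω)) (u, w, x) * prob p U u := by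
        rw [e1]; exact mul_pos hw hx
      have ht : 0 < prob p (fun ω => (U ω, Z ω, X ω)) (u, w, x) := by
        rcases mul_pos_iff.mp h5 with ⟨h, _⟩ | ⟨_, h⟩
        · exact h
        · linarith
      have h6 : 0 < prob p (fun ω => (U ω, Z ω)) (u, w) *
          prob p (fun ω => (Z ω, X ω)) (w, x) := by
        rw [← e2]; exact mul_pos ht hpw
      rcases mul_pos_iff.mp h6 with ⟨_, h⟩ | ⟨h, _⟩
      · exact h
      · linarith
  intro u h
  obtain ⟨ha, hb⟩ := h
  exact hsupp ((key u z ha).trans (key u z' hb).symm)
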